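/- Define t_n(y) = (1 + s_n(y)²/n)^n where s_n(y) = n·(exp(πiy/n) − 1). Then for every y ∈ ℝ, lim_{n→∞} t_n(y) = exp(−π²y²), and the convergence is uniform on every bounded interval of ℝ. -/

import Mathlib

noncomputable def sSeq (n : ℕ) (y : ℝ) : ℂ :=
  (n : ℂ) * (Complex.exp (Real.pi * Complex.I * y / n) - 1)

noncomputable def tSeq (n : ℕ) (y : ℝ) : ℂ :=
  (1 + (sSeq n y) ^ 2 / n) ^ n

/-!
With `x = π i y`, Taylor's bound for `exp` gives `s_n(y) = x + O(|x|² / n)`, hence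
`s_n(y)² = x² + O(1/n) = -π² y² + O(1/n)`. Writing `(1 + w/n)^n = exp (n log (1 + w/n))` and using
`n log (1 + w/n) = w + O(|w|² / n)`, we get `t_n(y) = exp (-π² y² + O(1/n))`. All the constants
depend only on a bound `K ≥ π |y|`, which yields the explicit uniform estimate `4 (K + 1)⁴ / n`.
-/

open Complex Filter Real

namespace Complex

lemma norm_natCast_mul_exp_div_sub_one_sub_le {x : ℂ} {n : ℕ} (hx : ‖x‖ ≤ n) :
    ‖n * (exp (x / n) - 1) - x‖ ≤ ‖x‖ ^ 2 / n := by
  rcases n.eq_zero_or_pos with rfl | hn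
  · simp_all
  have hxn : ‖x / n‖ ≤ 1 := by
    rw [norm_div, norm_natCast]; exact div_le_one_of_le₀ hx n.cast_nonneg
  have hsplit : n * (exp (x / n) - 1) - x = n * (exp (x / n) - 1 - x / n) := by
    rw [mul_sub (n : ℂ) _ (x / n), mul_div_cancel₀ x (Nat.cast_ne_zero.2 hn.ne')]
  calc ‖n * (exp (x / n) - 1) - x‖ = n * ‖exp (x / n) - 1 - x / n‖ := by
        rw [hsplit, norm_mul, norm_natCast]
    _ ≤ n * ‖x / n‖ ^ 2 := by gcongr; exact norm_exp_sub_one_sub_id_le hxn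
    _ = ‖x‖ ^ 2 / n := by rw [norm_div, norm_natCast]; field_simp

lemma norm_div_natCast_le_half {w : ℂ} {n : ℕ} (hw : 2 * ‖w‖ ≤ n) : ‖w / n‖ ≤ 1 / 2 := by
  rcases n.eq_zero_or_pos with rfl | hn
  · simp
  rw [norm_div, norm_natCast, div_le_iff₀ (by positivity)]
  linarith

lemma norm_log_one_add_sub_self_le_sq {z : ℂ} (hz : ‖z‖ ≤ 1 / 2) :
    ‖log (1 + z) - z‖ ≤ ‖z‖ ^ 2 := by
  refine (norm_log_one_add_sub_self_le (hz.trans_lt one_half_lt_one)).trans ?_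
  have : (1 - ‖z‖)⁻¹ ≤ 2 := by
    rw [inv_le_comm₀ (by linarith) two_pos]; linarith
  calc ‖z‖ ^ 2 * (1 - ‖z‖)⁻¹ / 2 ≤ ‖z‖ ^ 2 * 2 / 2 := by gcongr
    _ = ‖z‖ ^ 2 := by ring

lemma norm_natCast_mul_log_one_add_div_sub_le {w : ℂ} {n : ℕ} (hw : 2 * ‖w‖ ≤ n) :
    ‖n * log (1 + w / n) - w‖ ≤ ‖w‖ ^ 2 / n := by
  rcases n.eq_zero_or_pos with rfl | hn
  · obtain rfl : w = 0 := norm_le_zero_iff.1 (by simp at hw; linarith)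
    simp
  have hsplit : n * log (1 + w / n) - w = n * (log (1 + w / n) - w / n) := by
    rw [mul_sub (n : ℂ) _ (w / n), mul_div_cancel₀ w (Nat.cast_ne_zero.2 hn.ne')]
  calc ‖n * log (1 + w / n) - w‖ = n * ‖log (1 + w / n) - w / n‖ := by
        rw [hsplit, norm_mul, norm_natCast]
    _ ≤ n * ‖w / n‖ ^ 2 := by
        gcongr; exact norm_log_one_add_sub_self_le_sq (norm_div_natCast_le_half hw)
    _ = ‖w‖ ^ 2 / n := by rw [norm_div, norm_natCast]; field_simp

lemma norm_exp_sub_exp_le {a b : ℂ} (h : ‖a - b‖ ≤ 1) :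
    ‖exp a - exp b‖ ≤ 2 * ‖exp b‖ * ‖a - b‖ := by
  calc ‖exp a - exp b‖ = ‖exp b‖ * ‖exp (a - b) - 1‖ := by
        rw [← norm_mul, mul_sub, ← exp_add, add_sub_cancel, mul_one]
    _ ≤ ‖exp b‖ * (2 * ‖a - b‖) := by gcongr; exact norm_exp_sub_one_le h
    _ = 2 * ‖exp b‖ * ‖a - b‖ := by ring

lemma norm_one_add_div_pow_sub_exp_le {w b : ℂ} {n : ℕ} (hw : 2 * ‖w‖ ≤ n)
    (h : ‖w‖ ^ 2 / n + ‖w - b‖ ≤ 1) :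
    ‖(1 + w / n) ^ n - exp b‖ ≤ 2 * ‖exp b‖ * (‖w‖ ^ 2 / n + ‖w - b‖) := by
  have hne : 1 + w / n ≠ 0 := by
    intro h0
    have := norm_div_natCast_le_half hw
    rw [show w / n = -1 by linear_combination h0] at this
    norm_num at this
  have hd : ‖n * log (1 + w / n) - b‖ ≤ ‖w‖ ^ 2 / n + ‖w - b‖ :=
    (norm_sub_le_norm_sub_add_norm_sub _ w _).trans
      (add_le_add_left (norm_natCast_mul_log_one_add_div_sub_le hw) _)
  rw [← exp_log hne, ← exp_nat_mul]
  exact (norm_exp_sub_exp_le (hd.trans h)).trans (by gcongr)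

end Complex

lemma norm_pi_mul_ofReal_mul_I (y : ℝ) : ‖(π * y * I : ℂ)‖ = π * |y| := by
  rw [norm_mul, norm_I, mul_one, ← ofReal_mul, norm_real, norm_mul, norm_of_nonneg pi_pos.le,
    Real.norm_eq_abs]

lemma norm_sSeq_sub_le {n : ℕ} {y : ℝ} (h : π * |y| ≤ n) :
    ‖sSeq n y - π * y * I‖ ≤ (π * |y|) ^ 2 / n := by
  have hs : sSeq n y = n * (exp (π * y * I / n) - 1) := by
    rw [sSeq, mul_right_comm (π : ℂ)]
  rw [hs, ← norm_pi_mul_ofReal_mul_I]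
  exact norm_natCast_mul_exp_div_sub_one_sub_le (by rwa [norm_pi_mul_ofReal_mul_I])

lemma ofReal_exp_neg_pi_sq_mul_sq (y : ℝ) :
    ((Real.exp (-(π ^ 2) * y ^ 2) : ℝ) : ℂ) = exp ((π * y * I) ^ 2) := by
  rw [ofReal_exp, mul_pow, I_sq]
  push_cast
  ring_nf

lemma norm_tSeq_sub_le {K y : ℝ} {n : ℕ} (hy : π * |y| ≤ K) (hn : 4 * (K + 1) ^ 4 ≤ n) :
    ‖tSeq n y - ((Real.exp (-(π ^ 2) * y ^ 2) : ℝ) : ℂ)‖ ≤ 4 * (K + 1) ^ 4 / n := by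
  set x : ℂ := π * y * I
  set s := sSeq n y
  have hx : ‖x‖ ≤ K := (norm_pi_mul_ofReal_mul_I y).trans_le hy
  have hK : 0 ≤ K := (norm_nonneg x).trans hx
  have hK4 : (K + 1) ^ 2 ≤ (K + 1) ^ 4 := pow_le_pow_right₀ (by linarith) (by norm_num)
  have hn0 : 0 < (n : ℝ) := lt_of_lt_of_le (by positivity) hn
  have hxs : ‖s - x‖ ≤ K ^ 2 / n := by
    refine (norm_sSeq_sub_le (hy.trans ?_)).trans (by gcongr)
    nlinarith
  have hs : ‖s‖ ≤ K + 1 := by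
    have : K ^ 2 / n ≤ 1 := by rw [div_le_one hn0]; nlinarith
    linarith [norm_le_norm_sub_add s x]
  have hsq : ‖s ^ 2 - x ^ 2‖ ≤ (K + 1) ^ 4 / n := by
    have hsx : ‖s + x‖ ≤ 2 * K + 1 := by linarith [norm_add_le s x]
    calc ‖s ^ 2 - x ^ 2‖ = ‖s - x‖ * ‖s + x‖ := by rw [← norm_mul]; ring_nf
      _ ≤ K ^ 2 / n * (2 * K + 1) := by gcongr
      _ ≤ (K + 1) ^ 4 / n := by
        rw [div_mul_eq_mul_div]; gcongr; nlinarith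
  have hs2 : ‖s ^ 2‖ ≤ (K + 1) ^ 2 := by
    rw [norm_pow]; gcongr
  have hδ : ‖s ^ 2‖ ^ 2 / n + ‖s ^ 2 - x ^ 2‖ ≤ 2 * (K + 1) ^ 4 / n := by
    have : ‖s ^ 2‖ ^ 2 ≤ (K + 1) ^ 4 := by
      calc ‖s ^ 2‖ ^ 2 ≤ ((K + 1) ^ 2) ^ 2 := by gcongr
        _ = (K + 1) ^ 4 := by ring
    calc ‖s ^ 2‖ ^ 2 / n + ‖s ^ 2 - x ^ 2‖ ≤ (K + 1) ^ 4 / n + (K + 1) ^ 4 / n := by gcongr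
      _ = 2 * (K + 1) ^ 4 / n := by ring
  have hgauss : ‖exp (x ^ 2)‖ ≤ 1 := by
    rw [← ofReal_exp_neg_pi_sq_mul_sq, norm_real, Real.norm_of_nonneg (Real.exp_pos _).le,
      Real.exp_le_one_iff]
    nlinarith [sq_nonneg y, sq_nonneg π]
  rw [ofReal_exp_neg_pi_sq_mul_sq]
  calc ‖tSeq n y - exp (x ^ 2)‖
      ≤ 2 * ‖exp (x ^ 2)‖ * (‖s ^ 2‖ ^ 2 / n + ‖s ^ 2 - x ^ 2‖) := by
        refine norm_one_add_div_pow_sub_exp_le (by linarith) (hδ.trans ?_)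
        rw [div_le_one hn0]; linarith
    _ ≤ 2 * 1 * (2 * (K + 1) ^ 4 / n) := by gcongr
    _ = 4 * (K + 1) ^ 4 / n := by ring

lemma tendstoUniformlyOn_tSeq (N : ℝ) :
    TendstoUniformlyOn tSeq (fun y ↦ ((Real.exp (-(π ^ 2) * y ^ 2) : ℝ) : ℂ)) atTop
      {y | |y| ≤ N} := by
  set C := 4 * (π * N + 1) ^ 4
  rw [Metric.tendstoUniformlyOn_iff]
  intro ε hε
  filter_upwards [eventually_ge_atTop ⌈C⌉₊,
    (tendsto_const_div_atTop_nhds_zero_nat C).eventually (gt_mem_nhds hε)] with n hn hCn y hy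
  rw [dist_comm, dist_eq_norm]
  exact (norm_tSeq_sub_le (by gcongr) (Nat.ceil_le.1 hn)).trans_lt hCn

theorem stmt5 :
    (∀ y : ℝ, Filter.Tendsto (fun n : ℕ => tSeq n y) Filter.atTop
      (nhds ((Real.exp (-(Real.pi ^ 2) * y ^ 2) : ℝ) : ℂ))) ∧
    (∀ N ε : ℝ, 0 < N → 0 < ε → ∃ M : ℕ, ∀ n : ℕ, M ≤ n → ∀ y : ℝ, |y| ≤ N →
      ‖tSeq n y - ((Real.exp (-(Real.pi ^ 2) * y ^ 2) : ℝ) : ℂ)‖ < ε) := by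
  refine ⟨fun y ↦ (tendstoUniformlyOn_tSeq |y|).tendsto_at (Set.mem_ofPred.2 le_rfl),
    fun N ε _ hε ↦ ?_⟩
  obtain ⟨M, hM⟩ := eventually_atTop.1
    (Metric.tendstoUniformlyOn_iff.1 (tendstoUniformlyOn_tSeq N) ε hε)
  exact ⟨M, fun n hn y hy ↦ by simpa only [dist_eq_norm'] using hM n hn y hy⟩
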